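/- arXiv:2505.05770 — 6 statements merged into one kernel-verified Lean document; each statement's English description precedes it below -/
import Mathlib

section
/- Let ε > 0 and λ ∈ ℂ with λ ≠ 0, and suppose there exist vectors f, g ∈ ℂ^N with P_{ε,β} f = λ f and P_{ε,β} g = λ g + f. Then ⟨f, D_{k,β,L} f̄⟩ = 0, where f̄ denotes the entrywise complex conjugate of f. -/
noncomputable section
open Complex Filter Topology MeasureTheory

/-- `eC k b = exp(-2πi k b)`. -/
def eC (k : ℤ) (b : ℝ) : ℂ := Complex.exp (-2 * (Real.pi : ℂ) * Complex.I * (k : ℂ) * (b : ℂ))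

variable {N S : ℕ}

/-- Hermitian inner product `⟨v,w⟩ = ∑_j v j * conj (w j)` on `ℂ^N`. -/
def inn (v w : Fin N → ℂ) : ℂ := ∑ j, v j * (starRingEnd ℂ) (w j)

/-- Euclidean norm on `ℂ^N`. -/
def nrm (v : Fin N → ℂ) : ℝ := Real.sqrt (∑ j, Complex.normSq (v j))

/-- `W_ε = I + ε Ẇ` (complexified). -/
def Weps (Wd : Matrix (Fin N) (Fin N) ℝ) (ε : ℝ) : Matrix (Fin N) (Fin N) ℂ :=
  1 + (ε : ℂ) • (Wd.map Complex.ofReal)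

/-- The diagonal matrix `D_{k,α}` with entries `exp(-2πik α_j)`. -/
def DmatA (k : ℤ) (α : Fin N → ℝ) : Matrix (Fin N) (Fin N) ℂ :=
  Matrix.diagonal fun j => eC k (α j)

/-- Partial sums of the band-width vector: `Nsum L s = L 0 + ⋯ + L (s-1)`. -/
def Nsum (L : Fin S → ℕ) (s : ℕ) : ℕ := ∑ i : Fin S, if (i : ℕ) < s then L i else 0

/-- `j` belongs to the `s`-th band `B_s` (with `j` 0-indexed). -/
def inBand (L : Fin S → ℕ) (s : Fin S) (j : Fin N) : Prop :=
  Nsum L (s : ℕ) ≤ (j : ℕ) ∧ (j : ℕ) < Nsum L ((s : ℕ) + 1)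

/-- `D_{k,β,L}`: block-diagonal with `s`-th block `exp(-2πik β_s)·Id`, expressed
via the band-index function `bI` (where `bI j` is the band of `j`). -/
def Dmat (k : ℤ) (β : Fin S → ℝ) (bI : Fin N → Fin S) : Matrix (Fin N) (Fin N) ℂ :=
  Matrix.diagonal fun j => eC k (β (bI j))

/-- `P_{ε,β} = D_{k,β,L} W_ε`. -/
def Pmat (k : ℤ) (β : Fin S → ℝ) (bI : Fin N → Fin S) (Wd : Matrix (Fin N) (Fin N) ℝ)
    (ε : ℝ) : Matrix (Fin N) (Fin N) ℂ := Dmat k β bI * Weps Wd ε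

/-- `Ŵ_L`: the block-diagonal part of `Ẇ` (blocks `Ŵ_1, …, Ŵ_S`). -/
def WhatL (Wd : Matrix (Fin N) (Fin N) ℝ) (bI : Fin N → Fin S) : Matrix (Fin N) (Fin N) ℝ :=
  Matrix.of fun j l => if bI j = bI l then Wd j l else 0

/-- `P̂_{k,β,L} = D_{k,β,L} Ŵ_L`. -/
def Phat (k : ℤ) (β : Fin S → ℝ) (bI : Fin N → Fin S) (Wd : Matrix (Fin N) (Fin N) ℝ) :
    Matrix (Fin N) (Fin N) ℂ := Dmat k β bI * (WhatL Wd bI).map Complex.ofReal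

/-- `L`-admissibility of the family `W_ε = I + εẆ`. -/
def LAdmissible (L : Fin S → ℕ) (Wd : Matrix (Fin N) (Fin N) ℝ) (bI : Fin N → Fin S) : Prop :=
  Wd.IsSymm ∧ (∀ i j, i ≠ j → 0 ≤ Wd i j) ∧ (∀ i, ∑ j, Wd i j = 0) ∧
  (∃ μ : Fin N → ℝ, Function.Injective μ ∧ ∃ v : Fin N → Fin N → ℝ,
    (∀ i, v i ≠ 0) ∧ ∀ i, Wd.mulVec (v i) = μ i • v i) ∧
  (∀ s : Fin S, ∃ μ : Fin (L s) → ℝ, Function.Injective μ ∧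
    ∃ v : Fin (L s) → Fin N → ℝ, (∀ i, v i ≠ 0) ∧ (∀ i j, bI j ≠ s → v i j = 0) ∧
      ∀ i, (WhatL Wd bI).mulVec (v i) = μ i • v i)

/-- `β ∈ Γ`: for every nonzero integer `k'`, the exponentials `exp(-2πik' β_s)`
of distinct bands never coincide. -/
def Gamma (β : Fin S → ℝ) : Prop :=
  ∀ k' : ℤ, k' ≠ 0 → ∀ s1 s2 : Fin S, s1 ≠ s2 → eC k' (β s1) ≠ eC k' (β s2)

/-- Orthogonal projection `π_s` of `ℂ^N` onto `V_s`. -/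
def projBand (bI : Fin N → Fin S) (s : Fin S) (v : Fin N → ℂ) : Fin N → ℂ :=
  fun j => if bI j = s then v j else 0

/-- `min_{θ∈[0,2π)} ‖v − e^{iθ} w‖`. -/
def phaseDist (v w : Fin N → ℂ) : ℝ :=
  sInf ((fun θ : ℝ => nrm (v - Complex.exp (θ * Complex.I) • w)) '' Set.Ico 0 (2 * Real.pi))

/-- `dist_{ℂP}(v,w) = min_{θ∈[0,2π)} ‖v/‖v‖ − e^{iθ}·w/‖w‖‖`. -/
def cpDist (v w : Fin N → ℂ) : ℝ :=
  sInf ((fun θ : ℝ =>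
    nrm ((nrm v)⁻¹ • v - Complex.exp (θ * Complex.I) • ((nrm w)⁻¹ • w))) '' Set.Ico 0 (2 * Real.pi))

/-- if `P_{ε,β} f = λ f` and `P_{ε,β} g = λ g + f` with `λ ≠ 0`,
then `⟨f, D_{k,β,L} f̄⟩ = 0`. -/
theorem stmt5 (N S : ℕ) (hN : 1 ≤ N) (hS1 : 1 ≤ S) (hSN : S ≤ N) (k : ℤ)
    (β : Fin S → ℝ) (hβ : Function.Injective β)
    (L : Fin S → ℕ) (hL : ∀ s, 0 < L s) (hsum : ∑ s, L s = N)
    (bI : Fin N → Fin S) (hbI : ∀ j, inBand L (bI j) j)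
    (Wd : Matrix (Fin N) (Fin N) ℝ) (hsym : Wd.IsSymm)
    (ε : ℝ) (hε : 0 < ε) (lam : ℂ) (hlam : lam ≠ 0) (f g : Fin N → ℂ)
    (hf : (Pmat k β bI Wd ε).mulVec f = lam • f)
    (hg : (Pmat k β bI Wd ε).mulVec g = lam • g + f) :
    inn f ((Dmat k β bI).mulVec (fun j => (starRingEnd ℂ) (f j))) = 0 := by

  classical
  set d : Fin N → ℂ := fun j => eC k (β (bI j)) with hd
  have hdu : ∀ j, (starRingEnd ℂ) (d j) * d j = 1 := by
    intro j
    simp only [hd, eC]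
    rw [← Complex.exp_conj, ← Complex.exp_add]
    have : (starRingEnd ℂ) (-2 * (Real.pi : ℂ) * Complex.I * (k : ℂ) * ((β (bI j)) : ℂ)) =
        -(-2 * (Real.pi : ℂ) * Complex.I * (k : ℂ) * ((β (bI j)) : ℂ)) := by
      simp only [map_mul, map_neg, Complex.conj_I, Complex.conj_ofReal, map_ofNat,
        map_intCast]
      ring
    rw [this, neg_add_cancel, Complex.exp_zero]
  have hW : (Weps Wd ε).IsSymm := by
    unfold Weps
    apply Matrix.IsSymm.ext
    intro i j
    simp only [Matrix.add_apply, Matrix.smul_apply, Matrix.one_apply, Matrix.map_apply,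
      hsym.apply i j]
    congr 1
    simp [eq_comm]
  set B : (Fin N → ℂ) → (Fin N → ℂ) → ℂ :=
    fun u v => ∑ j, (starRingEnd ℂ) (d j) * u j * v j with hB
  have hsymW : ∀ u v : Fin N → ℂ,
      (∑ j, (Weps Wd ε).mulVec u j * v j) = ∑ j, u j * (Weps Wd ε).mulVec v j := by
    intro u v
    simp only [Matrix.mulVec, dotProduct, Finset.sum_mul, Finset.mul_sum]
    rw [Finset.sum_comm]
    refine Finset.sum_congr rfl fun l _ => Finset.sum_congr rfl fun j _ => ?_
    rw [hW.apply j l]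
    ring
  have hPleft : ∀ u v : Fin N → ℂ,
      B ((Pmat k β bI Wd ε).mulVec u) v = ∑ j, (Weps Wd ε).mulVec u j * v j := by
    intro u v
    simp only [hB]
    refine Finset.sum_congr rfl fun j _ => ?_
    have : (Pmat k β bI Wd ε).mulVec u j = d j * (Weps Wd ε).mulVec u j := by
      unfold Pmat Dmat
      rw [← Matrix.mulVec_mulVec]
      simp [Matrix.mulVec_diagonal, hd]
    rw [this]
    calc (starRingEnd ℂ) (d j) * (d j * (Weps Wd ε).mulVec u j) * v j
        = ((starRingEnd ℂ) (d j) * d j) * ((Weps Wd ε).mulVec u j * v j) := by ring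
      _ = (Weps Wd ε).mulVec u j * v j := by rw [hdu j, one_mul]
  have hPright : ∀ u v : Fin N → ℂ,
      B u ((Pmat k β bI Wd ε).mulVec v) = ∑ j, u j * (Weps Wd ε).mulVec v j := by
    intro u v
    simp only [hB]
    refine Finset.sum_congr rfl fun j _ => ?_
    have : (Pmat k β bI Wd ε).mulVec v j = d j * (Weps Wd ε).mulVec v j := by
      unfold Pmat Dmat
      rw [← Matrix.mulVec_mulVec]
      simp [Matrix.mulVec_diagonal, hd]
    rw [this]
    calc (starRingEnd ℂ) (d j) * u j * (d j * (Weps Wd ε).mulVec v j)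
        = ((starRingEnd ℂ) (d j) * d j) * (u j * (Weps Wd ε).mulVec v j) := by ring
      _ = u j * (Weps Wd ε).mulVec v j := by rw [hdu j, one_mul]
  have hkey : B ((Pmat k β bI Wd ε).mulVec f) g = B f ((Pmat k β bI Wd ε).mulVec g) := by
    rw [hPleft, hPright, hsymW]
  have hBff : B f f = 0 := by
    rw [hf, hg] at hkey
    have hL : B (lam • f) g = lam * B f g := by
      simp only [hB, Pi.smul_apply, smul_eq_mul, Finset.mul_sum]
      exact Finset.sum_congr rfl fun j _ => by ring
    have hR : B f (lam • g + f) = lam * B f g + B f f := by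
      simp only [hB, Pi.add_apply, Pi.smul_apply, smul_eq_mul, Finset.mul_sum,
        ← Finset.sum_add_distrib]
      exact Finset.sum_congr rfl fun j _ => by ring
    rw [hL, hR] at hkey
    exact (left_eq_add.mp hkey)
  rw [← hBff]
  simp only [hB, inn]
  refine Finset.sum_congr rfl fun j _ => ?_
  have : (Dmat k β bI).mulVec (fun j => (starRingEnd ℂ) (f j)) j
      = d j * (starRingEnd ℂ) (f j) := by
    unfold Dmat
    simp [Matrix.mulVec_diagonal, hd]
  rw [this]
  simp only [map_mul, Complex.conj_conj, RingHomCompTriple.comp_apply, RingHom.id_apply]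
  ring
end
end

section
/- Assume {W_ε} is L-admissible and the numbers e^{−2πikβ_1},…,e^{−2πikβ_S} are pairwise distinct. Fix s ∈ {1,…,S} and suppose that for each sufficiently small ε > 0, f_ε ∈ ℂ^N is a unit-norm vector with P_{ε,β} f_ε = λ_ε f_ε and λ_ε → e^{−2πikβ_s} as ε → 0. Then every accumulation point f_* of the family {f_ε} as ε → 0 is a unit-norm eigenvector of the matrix P̂_{k,β,L}, i.e. there exists λ_* ∈ ℂ with P̂_{k,β,L} f_* = λ_* f_*; moreover f_* ∈ V_s. -/
noncomputable section
open Complex Filter Topology MeasureTheory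

variable {N S : ℕ}

/-!
Write `d_j = e^{-2πikβ_{b(j)}}` and `c = e^{-2πikβ_s}`, so that the eigen-equation reads
`d_j (f_j + ε (Ẇ f)_j) = λ_ε f_j` coordinatewise. Along a filter realising the cluster point,
letting `ε → 0` gives `(d_j - c) f*_j = 0`, so `f*` lives on the band of `s`. On that band the
equation says `((λ_ε - c)/ε) f_j = c (Ẇ f)_j`; dividing by a coordinate where `f*` does not
vanish shows that the quotients `(λ_ε - c)/ε` converge to some `μ`, and in the limit
`c (Ẇ f*)_j = μ f*_j` on the band. Since `f*` vanishes off the band, `c Ẇ f*` agrees with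
`P̂ f*` there, and both sides vanish elsewhere.
-/

open Matrix

section PerturbedDiagonal

variable {ι n 𝕜 : Type*} [Fintype n] [NormedField 𝕜]
  {l : Filter ι} {d : n → 𝕜} {A : Matrix n n 𝕜} {ε lam : ι → 𝕜} {v : ι → n → 𝕜}
  {c : 𝕜} {vstar : n → 𝕜}

theorem diagonal_mul_one_add_smul_mulVec_apply [DecidableEq n] (e : 𝕜) (w : n → 𝕜) (j : n) :
    ((diagonal d * (1 + e • A)) *ᵥ w) j = d j * (w j + e * (A *ᵥ w) j) := by
  rw [← mulVec_mulVec, mulVec_diagonal, add_mulVec, one_mulVec, smul_mulVec]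
  rfl

theorem tendsto_mulVec_apply (hv : Tendsto v l (𝓝 vstar)) (j : n) :
    Tendsto (fun x => (A *ᵥ v x) j) l (𝓝 ((A *ᵥ vstar) j)) :=
  (continuous_apply j).continuousAt.tendsto.comp
    (((continuous_const.matrix_mulVec continuous_id).tendsto vstar).comp hv)

variable [DecidableEq n] [l.NeBot]

theorem apply_eq_zero_of_diagonal_ne (hε : Tendsto ε l (𝓝 0)) (hv : Tendsto v l (𝓝 vstar))
    (hlam : Tendsto lam l (𝓝 c))
    (heig : ∀ᶠ x in l, (diagonal d * (1 + ε x • A)) *ᵥ v x = lam x • v x)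
    (j : n) (hj : d j ≠ c) : vstar j = 0 := by
  have hlhs : Tendsto (fun x => d j * (v x j + ε x * (A *ᵥ v x) j)) l
      (𝓝 (d j * (vstar j + 0 * (A *ᵥ vstar) j))) :=
    (((tendsto_pi_nhds.mp hv j).add (hε.mul (tendsto_mulVec_apply hv j))).const_mul _)
  have hrhs : Tendsto (fun x => d j * (v x j + ε x * (A *ᵥ v x) j)) l (𝓝 (c * vstar j)) := by
    refine (hlam.mul (tendsto_pi_nhds.mp hv j)).congr' ?_
    filter_upwards [heig] with x hx
    rw [← diagonal_mul_one_add_smul_mulVec_apply, hx, Pi.smul_apply, smul_eq_mul]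
  have hlim := tendsto_nhds_unique hlhs hrhs
  have hfactor : (d j - c) * vstar j = 0 := by linear_combination hlim
  exact (mul_eq_zero.mp hfactor).resolve_left (sub_ne_zero.mpr hj)

theorem exists_eigenvalue_on_diagonal_eq (hε : Tendsto ε l (𝓝 0))
    (hv : Tendsto v l (𝓝 vstar)) (hlam : Tendsto lam l (𝓝 c))
    (heig : ∀ᶠ x in l, (diagonal d * (1 + ε x • A)) *ᵥ v x = lam x • v x)
    (hε0 : ∀ᶠ x in l, ε x ≠ 0) (hvstar : vstar ≠ 0) :
    ∃ μ : 𝕜, ∀ j, d j = c → c * (A *ᵥ vstar) j = μ * vstar j := by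
  have hquot : ∀ j, d j = c →
      ∀ᶠ x in l, (lam x - c) / ε x * v x j = c * (A *ᵥ v x) j := by
    intro j hj
    filter_upwards [heig, hε0] with x hx hεx
    have hcoord := congrFun hx j
    rw [diagonal_mul_one_add_smul_mulVec_apply, hj, Pi.smul_apply, smul_eq_mul] at hcoord
    rw [div_mul_eq_mul_div, div_eq_iff hεx]
    linear_combination -hcoord
  obtain ⟨j₀, hj₀⟩ : ∃ j, vstar j ≠ 0 := Function.ne_iff.mp hvstar
  have hdj₀ : d j₀ = c := by
    by_contra h
    exact hj₀ (apply_eq_zero_of_diagonal_ne hε hv hlam heig j₀ h)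
  have hvj : ∀ j, Tendsto (fun x => v x j) l (𝓝 (vstar j)) := tendsto_pi_nhds.mp hv
  set μ := c * (A *ᵥ vstar) j₀ / vstar j₀
  have hμ : Tendsto (fun x => (lam x - c) / ε x) l (𝓝 μ) := by
    refine (((tendsto_mulVec_apply hv j₀).const_mul c).div (hvj j₀) hj₀).congr' ?_
    filter_upwards [hquot j₀ hdj₀, (hvj j₀).eventually_ne hj₀] with x hx hvx
    change c * (A *ᵥ v x) j₀ / v x j₀ = _
    rw [div_eq_iff hvx, ← hx]
  refine ⟨μ, fun j hj => tendsto_nhds_unique ((tendsto_mulVec_apply hv j).const_mul c) ?_⟩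
  exact (hμ.mul (hvj j)).congr' ((hquot j hj).mono fun x hx => hx)

end PerturbedDiagonal

theorem continuous_nrm : Continuous (nrm : (Fin N → ℂ) → ℝ) :=
  Real.continuous_sqrt.comp <|
    continuous_finsetSum _ fun j _ => Complex.continuous_normSq.comp (continuous_apply j)

theorem Phat_mulVec_eq_smul {k : ℤ} {β : Fin S → ℝ} {bI : Fin N → Fin S}
    {Wd : Matrix (Fin N) (Fin N) ℝ} {s : Fin S} {v : Fin N → ℂ} {μ : ℂ}
    (hsupp : ∀ j, bI j ≠ s → v j = 0)
    (hμ : ∀ j, bI j = s → eC k (β s) * (Wd.map (↑) *ᵥ v) j = μ * v j) :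
    Phat k β bI Wd *ᵥ v = μ • v := by
  funext j
  rw [Phat, Dmat, ← mulVec_mulVec, mulVec_diagonal, Pi.smul_apply, smul_eq_mul]
  simp only [mulVec, dotProduct, map_apply] at hμ ⊢
  by_cases hj : bI j = s
  · rw [← hμ j hj, hj]
    congr 1
    refine Finset.sum_congr rfl fun l _ => ?_
    by_cases hl : bI l = s
    · simp [WhatL, hj, hl]
    · simp [hsupp l hl]
  · rw [hsupp j hj, mul_zero]
    refine mul_eq_zero_of_right _ (Finset.sum_eq_zero fun l _ => ?_)
    by_cases hl : bI j = bI l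
    · simp [hsupp l (hl ▸ hj)]
    · simp [WhatL, hl]

theorem stmt6_general (N S : ℕ) (k : ℤ)
    (β : Fin S → ℝ)
    (L : Fin S → ℕ)
    (bI : Fin N → Fin S) (hbI : ∀ j, inBand L (bI j) j)
    (Wd : Matrix (Fin N) (Fin N) ℝ)
    (hdist : ∀ s1 s2 : Fin S, s1 ≠ s2 → eC k (β s1) ≠ eC k (β s2))
    (s : Fin S) (ε₀ : ℝ) (hε₀ : 0 < ε₀)
    (f : ℝ → Fin N → ℂ) (lam : ℝ → ℂ)
    (hunit : ∀ ε ∈ Set.Ioo (0:ℝ) ε₀, nrm (f ε) = 1)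
    (heig : ∀ ε ∈ Set.Ioo (0:ℝ) ε₀, (Pmat k β bI Wd ε).mulVec (f ε) = lam ε • f ε)
    (hlam : Tendsto lam (𝓝[>] (0:ℝ)) (𝓝 (eC k (β s))))
    (fstar : Fin N → ℂ) (hacc : MapClusterPt fstar (𝓝[>] (0:ℝ)) f) :
    nrm fstar = 1 ∧ (∀ j, ¬ inBand L s j → fstar j = 0) ∧
      ∃ lamstar : ℂ, (Phat k β bI Wd).mulVec fstar = lamstar • fstar := by
  obtain ⟨U, hU, hfU⟩ := mapClusterPt_iff_ultrafilter.mp hacc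
  have hsmall : ∀ᶠ ε in (U : Filter ℝ), ε ∈ Set.Ioo 0 ε₀ := hU (Ioo_mem_nhdsGT hε₀)
  have hεU : Tendsto (fun ε : ℝ => (ε : ℂ)) U (𝓝 0) := by
    simpa using ((Complex.continuous_ofReal.tendsto 0).mono_left nhdsWithin_le_nhds).mono_left hU
  have hlamU := hlam.mono_left hU
  have heigU : ∀ᶠ ε : ℝ in U, (diagonal (fun j => eC k (β (bI j))) *
      (1 + (ε : ℂ) • Wd.map (↑))) *ᵥ f ε = lam ε • f ε := hsmall.mono heig
  have hnrm : nrm fstar = 1 :=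
    tendsto_nhds_unique ((continuous_nrm.tendsto _).comp hfU)
      (tendsto_const_nhds.congr' (hsmall.mono fun ε hε => (hunit ε hε).symm))
  have hzero : ∀ j, bI j ≠ s → fstar j = 0 := fun j hj =>
    apply_eq_zero_of_diagonal_ne hεU hfU hlamU heigU j (hdist _ _ hj)
  have hne : fstar ≠ 0 := by
    rintro rfl
    simp [nrm] at hnrm
  obtain ⟨μ, hμ⟩ := exists_eigenvalue_on_diagonal_eq hεU hfU hlamU heigU
    (hsmall.mono fun ε hε => Complex.ofReal_ne_zero.mpr hε.1.ne') hne
  refine ⟨hnrm, fun j hj => hzero j fun h => hj (h ▸ hbI j), μ, ?_⟩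
  exact Phat_mulVec_eq_smul hzero fun j hj => hμ j (by rw [hj])

/-- accumulation points of unit eigenvectors `f_ε` (with `λ_ε → exp(-2πikβ_s)`)
are unit-norm eigenvectors of `P̂_{k,β,L}` lying in `V_s`. -/
theorem stmt6 (N S : ℕ) (hN : 1 ≤ N) (hS1 : 1 ≤ S) (hSN : S ≤ N) (k : ℤ)
    (β : Fin S → ℝ) (hβ : Function.Injective β)
    (L : Fin S → ℕ) (hL : ∀ s, 0 < L s) (hsum : ∑ s, L s = N)
    (bI : Fin N → Fin S) (hbI : ∀ j, inBand L (bI j) j)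
    (Wd : Matrix (Fin N) (Fin N) ℝ) (hadm : LAdmissible L Wd bI)
    (hdist : ∀ s1 s2 : Fin S, s1 ≠ s2 → eC k (β s1) ≠ eC k (β s2))
    (s : Fin S) (ε₀ : ℝ) (hε₀ : 0 < ε₀)
    (f : ℝ → Fin N → ℂ) (lam : ℝ → ℂ)
    (hunit : ∀ ε ∈ Set.Ioo (0:ℝ) ε₀, nrm (f ε) = 1)
    (heig : ∀ ε ∈ Set.Ioo (0:ℝ) ε₀, (Pmat k β bI Wd ε).mulVec (f ε) = lam ε • f ε)
    (hlam : Tendsto lam (𝓝[>] (0:ℝ)) (𝓝 (eC k (β s))))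
    (fstar : Fin N → ℂ) (hacc : MapClusterPt fstar (𝓝[>] (0:ℝ)) f) :
    nrm fstar = 1 ∧ (∀ j, ¬ inBand L s j → fstar j = 0) ∧
      ∃ lamstar : ℂ, (Phat k β bI Wd).mulVec fstar = lamstar • fstar :=
  stmt6_general N S k β L bI hbI Wd hdist s ε₀ hε₀ f lam hunit heig hlam fstar hacc
end
end

section
/- Assume {W_ε} is L-admissible and β ∈ Γ. For each sufficiently small ε > 0 let {f_ε^{(1)},…,f_ε^{(N)}} be a basis of ℂ^N of unit-norm eigenvectors of P_{ε,β}, with P_{ε,β} f_ε^{(ℓ)} = λ_ε^{(ℓ)} f_ε^{(ℓ)}, labelled so that λ_ε^{(ℓ)} → e^{−2πikβ_{s_ℓ}} as ε → 0, and let {f^{(1)},…,f^{(N)}} be an orthonormal eigenbasis of P̂_{k,β,L} with f^{(ℓ)} ∈ V_{s_ℓ} and min_{θ∈[0,2π)} ‖f_ε^{(ℓ)} − e^{iθ} f^{(ℓ)}‖ → 0. Denote by λ̂^{(ℓ)} the eigenvalue of P̂_{k,β,L} associated with f^{(ℓ)}. Then for every ℓ, (λ_ε^{(ℓ)} − e^{−2πikβ_{s_ℓ}})/ε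 → λ̂^{(ℓ)} as ε → 0; that is, λ_ε^{(ℓ)} = e^{−2πikβ_{s_ℓ}} + ε λ̂^{(ℓ)} + o(ε). -/
noncomputable section
open Complex Filter Topology MeasureTheory

variable {N S : ℕ}

/-!
Write `P_ε = D + ε A` with `A = D Ẇ`, and let `c = e^{-2πikβ_{s_ℓ}}`. Since `F = f^{(ℓ)}` is
supported in the band `s_ℓ`, on which `D` acts as the scalar `c`, pairing the eigenvalue equation
`P_ε f_ε = λ_ε f_ε` with `F` gives `(λ_ε - c) ⟨f_ε, F⟩ = ε ⟨A f_ε, F⟩`. After rotating `f_ε` by a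
phase it converges to `F`, so the quotient `(λ_ε - c)/ε = ⟨A f_ε, F⟩ / ⟨f_ε, F⟩` tends to
`⟨A F, F⟩ = ⟨P̂ F, F⟩ = λ̂`: on vectors supported in one band, `Ẇ` and its block-diagonal part
`Ŵ_L` agree.
-/

open Matrix

lemma inn_eq_dotProduct (v w : Fin N → ℂ) : inn v w = v ⬝ᵥ star w := rfl

lemma inn_add_left (u v w : Fin N → ℂ) : inn (u + v) w = inn u w + inn v w := by
  simp only [inn_eq_dotProduct, add_dotProduct]

lemma inn_smul_left (c : ℂ) (v w : Fin N → ℂ) : inn (c • v) w = c * inn v w := by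
  simp only [inn_eq_dotProduct, smul_dotProduct, smul_eq_mul]

lemma continuous_inn_left (w : Fin N → ℂ) : Continuous fun v : Fin N → ℂ => inn v w := by
  unfold inn
  fun_prop

lemma norm_le_nrm (v : Fin N → ℂ) (j : Fin N) : ‖v j‖ ≤ nrm v := by
  rw [← Real.sqrt_sq (norm_nonneg (v j)), ← Complex.normSq_eq_norm_sq]
  exact Real.sqrt_le_sqrt
    (Finset.single_le_sum (fun i _ => Complex.normSq_nonneg (v i)) (Finset.mem_univ j))

lemma exists_phase_nrm_lt (v w : Fin N → ℂ) {r : ℝ} (hr : 0 < r) :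
    ∃ θ : ℝ, nrm (v - Complex.exp (θ * Complex.I) • w) < phaseDist v w + r := by
  have hne : ((fun θ : ℝ => nrm (v - Complex.exp (θ * Complex.I) • w)) ''
      Set.Ico 0 (2 * Real.pi)).Nonempty :=
    ⟨_, 0, ⟨le_rfl, by positivity⟩, rfl⟩
  obtain ⟨_, ⟨θ, -, rfl⟩, hθ⟩ := exists_lt_of_csInf_lt hne (lt_add_of_pos_right (phaseDist v w) hr)
  exact ⟨θ, hθ⟩

lemma exists_phase_tendsto_of_phaseDist {v : ℝ → Fin N → ℂ} {w : Fin N → ℂ}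
    (h : Tendsto (fun ε => phaseDist (v ε) w) (𝓝[>] 0) (𝓝 0)) :
    ∃ θ : ℝ → ℝ, Tendsto (fun ε => Complex.exp (-(θ ε) * Complex.I) • v ε) (𝓝[>] 0) (𝓝 w) := by
  have hchoice : ∀ ε : ℝ, ∃ θ : ℝ,
      0 < ε → nrm (v ε - Complex.exp (θ * Complex.I) • w) < phaseDist (v ε) w + ε := by
    intro ε
    by_cases hε : 0 < ε
    · obtain ⟨θ, hθ⟩ := exists_phase_nrm_lt (v ε) w hε
      exact ⟨θ, fun _ => hθ⟩
    · exact ⟨0, fun h => absurd h hε⟩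
  choose θ hθ using hchoice
  refine ⟨θ, tendsto_pi_nhds.2 fun j => tendsto_iff_norm_sub_tendsto_zero.2 ?_⟩
  have hrotate : ∀ ε, ‖(Complex.exp (-(θ ε) * Complex.I) • v ε) j - w j‖
      = ‖(v ε - Complex.exp (θ ε * Complex.I) • w) j‖ := by
    intro ε
    have hinv : Complex.exp (-(θ ε) * Complex.I) * Complex.exp (θ ε * Complex.I) = 1 := by
      rw [← Complex.exp_add]; simp
    have hfactor : (Complex.exp (-(θ ε) * Complex.I) • v ε) j - w j
        = Complex.exp (-(θ ε) * Complex.I) * (v ε - Complex.exp (θ ε * Complex.I) • w) j := by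
      simp only [Pi.sub_apply, Pi.smul_apply, smul_eq_mul]
      linear_combination (w j) * hinv
    rw [hfactor, norm_mul, ← Complex.ofReal_neg, Complex.norm_exp_ofReal_mul_I, one_mul]
  have hlim : Tendsto (fun ε : ℝ => phaseDist (v ε) w + ε) (𝓝[>] 0) (𝓝 0) := by
    simpa using h.add (tendsto_nhdsWithin_of_tendsto_nhds tendsto_id)
  refine squeeze_zero' (Eventually.of_forall fun _ => norm_nonneg _) ?_ hlim
  filter_upwards [self_mem_nhdsWithin] with ε hε
  rw [hrotate]
  exact (norm_le_nrm _ j).trans (hθ ε hε).le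

theorem tendsto_eigenvalue_sub_div_of_tendsto_eigenvector {D A : Matrix (Fin N) (Fin N) ℂ}
    {F : Fin N → ℂ} {c : ℂ} (hD : ∀ v, inn (D *ᵥ v) F = c * inn v F) (hF : inn F F = 1)
    {g : ℝ → Fin N → ℂ} {lam : ℝ → ℂ}
    (heig : ∀ᶠ ε : ℝ in 𝓝[>] 0, (D + (ε : ℂ) • A) *ᵥ g ε = lam ε • g ε)
    (hg : Tendsto g (𝓝[>] 0) (𝓝 F)) :
    Tendsto (fun ε : ℝ => (lam ε - c) / ε) (𝓝[>] 0) (𝓝 (inn (A *ᵥ F) F)) := by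
  have hpair : Tendsto (fun ε => inn (g ε) F) (𝓝[>] 0) (𝓝 1) :=
    hF ▸ ((continuous_inn_left F).tendsto F).comp hg
  have hpairA : Tendsto (fun ε => inn (A *ᵥ g ε) F) (𝓝[>] 0) (𝓝 (inn (A *ᵥ F) F)) :=
    (((continuous_inn_left F).comp
      (continuous_const.matrix_mulVec continuous_id)).tendsto F).comp hg
  have hquot := hpairA.div hpair one_ne_zero
  rw [div_one] at hquot
  refine hquot.congr' ?_
  filter_upwards [heig, self_mem_nhdsWithin, hpair.eventually_ne one_ne_zero] with ε hε hpos hne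
  have hεne : (ε : ℂ) ≠ 0 := Complex.ofReal_ne_zero.2 (ne_of_gt hpos)
  have hkey : (lam ε - c) * inn (g ε) F = ε * inn (A *ᵥ g ε) F := by
    have := congrArg (fun v => inn v F) hε
    simp only [add_mulVec, smul_mulVec, inn_add_left, inn_smul_left, hD] at this
    linear_combination -this
  rw [Pi.div_apply, div_eq_div_iff hne hεne]
  linear_combination -hkey

lemma inn_diagonal_mulVec_of_support {d : Fin N → ℂ} {F : Fin N → ℂ} {c : ℂ}
    (h : ∀ j, F j ≠ 0 → d j = c) (v : Fin N → ℂ) :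
    inn (diagonal d *ᵥ v) F = c * inn v F := by
  simp only [inn, mulVec_diagonal, Finset.mul_sum]
  refine Finset.sum_congr rfl fun j _ => ?_
  by_cases hj : F j = 0
  · simp [hj]
  · rw [h j hj, mul_assoc]

lemma inn_mulVec_self_congr {A B : Matrix (Fin N) (Fin N) ℂ} {F : Fin N → ℂ}
    (h : ∀ j l, F j ≠ 0 → F l ≠ 0 → A j l = B j l) :
    inn (A *ᵥ F) F = inn (B *ᵥ F) F := by
  refine Finset.sum_congr rfl fun j _ => ?_
  by_cases hj : F j = 0
  · simp [hj]
  refine congrArg (· * _) (Finset.sum_congr rfl fun l _ => ?_ : ∑ l, A j l * F l = _)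
  by_cases hl : F l = 0
  · simp [hl]
  · rw [h j l hj hl]

lemma Nsum_mono (L : Fin S → ℕ) {a b : ℕ} (h : a ≤ b) : Nsum L a ≤ Nsum L b :=
  Finset.sum_le_sum fun i _ => by split_ifs <;> omega

lemma inBand_unique (L : Fin S → ℕ) {s s' : Fin S} {j : Fin N}
    (h : inBand L s j) (h' : inBand L s' j) : s = s' := by
  obtain ⟨hlo, hhi⟩ := h
  obtain ⟨hlo', hhi'⟩ := h'
  by_contra hne
  rcases Fin.lt_or_lt_of_ne hne with hl | hl
  · have := Nsum_mono L (show (s : ℕ) + 1 ≤ s' from hl); omega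
  · have := Nsum_mono L (show (s' : ℕ) + 1 ≤ s from hl); omega

lemma Pmat_eq_add (k : ℤ) (β : Fin S → ℝ) (bI : Fin N → Fin S) (Wd : Matrix (Fin N) (Fin N) ℝ)
    (ε : ℝ) :
    Pmat k β bI Wd ε = Dmat k β bI + (ε : ℂ) • (Dmat k β bI * Wd.map Complex.ofReal) := by
  rw [Pmat, Weps, mul_add, mul_one, Matrix.mul_smul]

theorem stmt8_general (N S : ℕ) (k : ℤ) (β : Fin S → ℝ) (L : Fin S → ℕ)
    (bI : Fin N → Fin S) (hbI : ∀ j, inBand L (bI j) j)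
    (Wd : Matrix (Fin N) (Fin N) ℝ) (ε₀ : ℝ) (hε₀ : 0 < ε₀)
    (f : ℝ → Fin N → Fin N → ℂ) (lam : ℝ → Fin N → ℂ)
    (heig : ∀ ε ∈ Set.Ioo (0:ℝ) ε₀, ∀ ℓ,
      (Pmat k β bI Wd ε).mulVec (f ε ℓ) = lam ε ℓ • f ε ℓ)
    (F : Fin N → Fin N → ℂ) (lamhat : Fin N → ℂ)
    (horth : ∀ i j, inn (F i) (F j) = if i = j then 1 else 0)
    (heigF : ∀ ℓ, (Phat k β bI Wd).mulVec (F ℓ) = lamhat ℓ • F ℓ)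
    (hsupp : ∀ ℓ j, ¬ inBand L (bI ℓ) j → F ℓ j = 0)
    (hconv : ∀ ℓ, Tendsto (fun ε => phaseDist (f ε ℓ) (F ℓ)) (𝓝[>] (0:ℝ)) (𝓝 0)) :
    ∀ ℓ, Tendsto (fun ε : ℝ => (lam ε ℓ - eC k (β (bI ℓ))) / (ε : ℂ))
      (𝓝[>] (0:ℝ)) (𝓝 (lamhat ℓ)) := by
  intro ℓ
  have hband : ∀ j, F ℓ j ≠ 0 → bI j = bI ℓ := fun j hj =>
    inBand_unique L (hbI j) (not_not.1 fun h => hj (hsupp ℓ j h))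
  have hunitF : inn (F ℓ) (F ℓ) = 1 := by simpa using horth ℓ ℓ
  obtain ⟨θ, hθ⟩ := exists_phase_tendsto_of_phaseDist (hconv ℓ)
  have heigRot : ∀ᶠ ε : ℝ in 𝓝[>] 0,
      (Dmat k β bI + (ε : ℂ) • (Dmat k β bI * Wd.map Complex.ofReal)) *ᵥ
        (Complex.exp (-(θ ε) * Complex.I) • f ε ℓ) =
      lam ε ℓ • Complex.exp (-(θ ε) * Complex.I) • f ε ℓ := by
    filter_upwards [Ioo_mem_nhdsGT_of_mem ⟨le_rfl, hε₀⟩] with ε hε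
    rw [← Pmat_eq_add, mulVec_smul, heig ε hε ℓ, smul_comm]
  have hlim := tendsto_eigenvalue_sub_div_of_tendsto_eigenvector
    (inn_diagonal_mulVec_of_support fun j hj => by rw [hband j hj]) hunitF heigRot hθ
  have hblock : ∀ j l, F ℓ j ≠ 0 → F ℓ l ≠ 0 →
      (Dmat k β bI * Wd.map Complex.ofReal) j l = Phat k β bI Wd j l := fun j l hj hl => by
    simp [Phat, Dmat, WhatL, diagonal_mul, (hband j hj).trans (hband l hl).symm]
  rwa [inn_mulVec_self_congr hblock, heigF, inn_smul_left, hunitF, mul_one] at hlim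

/-- first-order expansion of the eigenvalues:
`(λ_ε^{(ℓ)} − exp(−2πikβ_{s_ℓ}))/ε → λ̂^{(ℓ)}`. -/
theorem stmt8 (N S : ℕ) (hN : 1 ≤ N) (hS1 : 1 ≤ S) (hSN : S ≤ N) (k : ℤ)
    (β : Fin S → ℝ) (hβ : Function.Injective β)
    (L : Fin S → ℕ) (hL : ∀ s, 0 < L s) (hsum : ∑ s, L s = N)
    (bI : Fin N → Fin S) (hbI : ∀ j, inBand L (bI j) j)
    (Wd : Matrix (Fin N) (Fin N) ℝ) (hadm : LAdmissible L Wd bI) (hΓ : Gamma β)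
    (ε₀ : ℝ) (hε₀ : 0 < ε₀)
    (f : ℝ → Fin N → Fin N → ℂ) (lam : ℝ → Fin N → ℂ)
    (hbasis : ∀ ε ∈ Set.Ioo (0:ℝ) ε₀, LinearIndependent ℂ (f ε))
    (hspan : ∀ ε ∈ Set.Ioo (0:ℝ) ε₀, Submodule.span ℂ (Set.range (f ε)) = ⊤)
    (hunit : ∀ ε ∈ Set.Ioo (0:ℝ) ε₀, ∀ ℓ, nrm (f ε ℓ) = 1)
    (heig : ∀ ε ∈ Set.Ioo (0:ℝ) ε₀, ∀ ℓ,
      (Pmat k β bI Wd ε).mulVec (f ε ℓ) = lam ε ℓ • f ε ℓ)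
    (hlabel : ∀ ℓ, Tendsto (fun ε => lam ε ℓ) (𝓝[>] (0:ℝ)) (𝓝 (eC k (β (bI ℓ)))))
    (F : Fin N → Fin N → ℂ) (lamhat : Fin N → ℂ)
    (horth : ∀ i j, inn (F i) (F j) = if i = j then 1 else 0)
    (heigF : ∀ ℓ, (Phat k β bI Wd).mulVec (F ℓ) = lamhat ℓ • F ℓ)
    (hsupp : ∀ ℓ j, ¬ inBand L (bI ℓ) j → F ℓ j = 0)
    (hconv : ∀ ℓ, Tendsto (fun ε => phaseDist (f ε ℓ) (F ℓ)) (𝓝[>] (0:ℝ)) (𝓝 0)) :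
    ∀ ℓ, Tendsto (fun ε : ℝ => (lam ε ℓ - eC k (β (bI ℓ))) / (ε : ℂ))
      (𝓝[>] (0:ℝ)) (𝓝 (lamhat ℓ)) :=
  stmt8_general N S k β L bI hbI Wd ε₀ hε₀ f lam heig F lamhat horth heigF hsupp hconv
end
end

section
/- Let ε > 0 and suppose f, g ∈ ℂ^N and λ, μ ∈ ℂ satisfy P_{ε,β} f = λ f and P_{ε,β} g = μ g, with λ ≠ μ and λ ≠ 0. Then ⟨f, D_{k,β,L} ḡ⟩ = 0, where ḡ denotes the entrywise complex conjugate of g. -/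
noncomputable section
open Complex Filter Topology MeasureTheory

variable {N S : ℕ}

lemma eC_conj_mul (k : ℤ) (b : ℝ) : (starRingEnd ℂ) (eC k b) * eC k b = 1 := by
  rw [eC, ← Complex.exp_conj, ← Complex.exp_add]
  have h : (starRingEnd ℂ) (-2 * (Real.pi : ℂ) * Complex.I * (k : ℂ) * (b : ℂ)) =
      -(-2 * (Real.pi : ℂ) * Complex.I * (k : ℂ) * (b : ℂ)) := by
    simp only [map_mul, Complex.conj_I, Complex.conj_ofReal, map_neg, map_ofNat,
      map_intCast]
    ring
  rw [h, neg_add_cancel, Complex.exp_zero]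

/-- eigenvectors of `P_{ε,β}` for distinct eigenvalues `λ ≠ μ`, `λ ≠ 0`,
satisfy `⟨f, D_{k,β,L} ḡ⟩ = 0`. -/
theorem stmt10 (N S : ℕ) (hN : 1 ≤ N) (hS1 : 1 ≤ S) (hSN : S ≤ N) (k : ℤ)
    (β : Fin S → ℝ) (hβ : Function.Injective β)
    (L : Fin S → ℕ) (hL : ∀ s, 0 < L s) (hsum : ∑ s, L s = N)
    (bI : Fin N → Fin S) (hbI : ∀ j, inBand L (bI j) j)
    (Wd : Matrix (Fin N) (Fin N) ℝ) (hsym : Wd.IsSymm)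
    (ε : ℝ) (hε : 0 < ε) (lam μ : ℂ) (hne : lam ≠ μ) (hlam : lam ≠ 0)
    (f g : Fin N → ℂ)
    (hf : (Pmat k β bI Wd ε).mulVec f = lam • f)
    (hg : (Pmat k β bI Wd ε).mulVec g = μ • g) :
    inn f ((Dmat k β bI).mulVec (fun j => (starRingEnd ℂ) (g j))) = 0 := by
  classical
  set d : Fin N → ℂ := fun j => eC k (β (bI j)) with hd
  have hdu : ∀ j, (starRingEnd ℂ) (d j) * d j = 1 := fun j => eC_conj_mul k (β (bI j))
  set W : Matrix (Fin N) (Fin N) ℂ := Weps Wd ε with hW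
  have hWsym : ∀ i j, W i j = W j i := by
    intro i j
    have hWd : Wd i j = Wd j i := hsym.apply j i
    simp [hW, Weps, Matrix.one_apply, Matrix.map_apply, hWd, eq_comm]
  -- eigen equations componentwise
  have hf' : ∀ j, W.mulVec f j = lam * ((starRingEnd ℂ) (d j) * f j) := by
    intro j
    have h1 : d j * W.mulVec f j = lam * f j := by
      have := congrFun hf j
      rw [Pmat, ← Matrix.mulVec_mulVec] at this
      simpa [Dmat, Matrix.mulVec_diagonal, hW] using this
    have := congrArg (fun z => (starRingEnd ℂ) (d j) * z) h1
    simp only [← mul_assoc, hdu j, one_mul] at this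
    rw [this]; ring
  have hg' : ∀ j, W.mulVec g j = μ * ((starRingEnd ℂ) (d j) * g j) := by
    intro j
    have h1 : d j * W.mulVec g j = μ * g j := by
      have := congrFun hg j
      rw [Pmat, ← Matrix.mulVec_mulVec] at this
      simpa [Dmat, Matrix.mulVec_diagonal, hW] using this
    have := congrArg (fun z => (starRingEnd ℂ) (d j) * z) h1
    simp only [← mul_assoc, hdu j, one_mul] at this
    rw [this]; ring
  set B : ℂ := ∑ j, (starRingEnd ℂ) (d j) * f j * g j with hB
  have h1 : lam * B = ∑ j, ∑ l, W j l * f l * g j := by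
    rw [hB, Finset.mul_sum]
    refine Finset.sum_congr rfl fun j _ => ?_
    have := hf' j
    rw [Matrix.mulVec, dotProduct] at this
    calc lam * ((starRingEnd ℂ) (d j) * f j * g j)
        = (lam * ((starRingEnd ℂ) (d j) * f j)) * g j := by ring
      _ = (∑ l, W j l * f l) * g j := by rw [← this]
      _ = ∑ l, W j l * f l * g j := by rw [Finset.sum_mul]
  have h2 : μ * B = ∑ j, ∑ l, W j l * g l * f j := by
    rw [hB, Finset.mul_sum]
    refine Finset.sum_congr rfl fun j _ => ?_
    have := hg' j
    rw [Matrix.mulVec, dotProduct] at this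
    calc μ * ((starRingEnd ℂ) (d j) * f j * g j)
        = (μ * ((starRingEnd ℂ) (d j) * g j)) * f j := by ring
      _ = (∑ l, W j l * g l) * f j := by rw [← this]
      _ = ∑ l, W j l * g l * f j := by rw [Finset.sum_mul]
  have heq : lam * B = μ * B := by
    rw [h1, h2, Finset.sum_comm]
    refine Finset.sum_congr rfl fun j _ => Finset.sum_congr rfl fun l _ => ?_
    rw [hWsym l j]; ring
  have hB0 : B = 0 := by
    by_contra h
    exact hne (mul_right_cancel₀ h heq)
  -- now identify the goal with B
  have : inn f ((Dmat k β bI).mulVec (fun j => (starRingEnd ℂ) (g j))) = B := by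
    rw [inn, hB]
    refine Finset.sum_congr rfl fun j _ => ?_
    simp [Dmat, Matrix.mulVec_diagonal, map_mul]
    ring
  rw [this, hB0]
end
end

section
/- Assume {W_ε} is L-admissible, β ∈ Γ, S > 1 and k ≠ 0, and let ({f^{(ℓ)}}, {λ̂^{(ℓ)}}, {f_ε^{(ℓ)}}, {λ_ε^{(ℓ)}}) be a convergent eigenbasis family on (0,γ). Then for every ℓ ∈ {1,…,N} and every j ∈ {1,…,N} with j ∉ B_{s_ℓ}, lim_{ε→0} (f_ε^{(ℓ)})_j / ε = (e^{−2πikβ_{s_ℓ}} − e^{−2πikβ_{s_j}})^{−1} · (D_{k,β,L} Ẇ f^{(ℓ)})_j, where s_j denotes the index with j ∈ B_{s_j}; equivalently, lim_{ε→0} ((f_ε^{(ℓ)})_j − (f^{(ℓ)})_j)/ε equals the same quantity since (f^{(ℓ)})_j = 0. -/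
noncomputable section
open Complex Filter Topology MeasureTheory

variable {N S : ℕ}

/-- A convergent eigenbasis family on `(0,γ)`: an orthonormal eigenbasis `F` of
`P̂_{k,β,L}` (with eigenvalues `lamhat` and `F ℓ ∈ V_{s_ℓ}`) together with, for each
`ε ∈ (0,γ)`, a basis `f ε` of unit-norm eigenvectors of `P_{ε,β}` with pairwise
distinct eigenvalues `lam ε`, depending smoothly on `ε` and converging to `F`. -/
structure ConvFam (N S : ℕ) (k : ℤ) (β : Fin S → ℝ) (L : Fin S → ℕ) (bI : Fin N → Fin S)
    (Wd : Matrix (Fin N) (Fin N) ℝ) (γ : ℝ) where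
  F : Fin N → Fin N → ℂ
  lamhat : Fin N → ℂ
  f : ℝ → Fin N → Fin N → ℂ
  lam : ℝ → Fin N → ℂ
  orth : ∀ i j, inn (F i) (F j) = if i = j then 1 else 0
  supp : ∀ ℓ j, ¬ inBand L (bI ℓ) j → F ℓ j = 0
  eigF : ∀ ℓ, (Phat k β bI Wd).mulVec (F ℓ) = lamhat ℓ • F ℓ
  indep : ∀ ε ∈ Set.Ioo (0:ℝ) γ, LinearIndependent ℂ (f ε)
  spans : ∀ ε ∈ Set.Ioo (0:ℝ) γ, Submodule.span ℂ (Set.range (f ε)) = ⊤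
  unit : ∀ ε ∈ Set.Ioo (0:ℝ) γ, ∀ ℓ, nrm (f ε ℓ) = 1
  eig : ∀ ε ∈ Set.Ioo (0:ℝ) γ, ∀ ℓ,
    (Pmat k β bI Wd ε).mulVec (f ε ℓ) = lam ε ℓ • f ε ℓ
  distinct : ∀ ε ∈ Set.Ioo (0:ℝ) γ, Function.Injective (lam ε)
  smooth : ∀ ℓ, ContDiffOn ℝ (⊤ : ℕ∞) (fun ε => f ε ℓ) (Set.Ioo (0:ℝ) γ)
  conv : ∀ ℓ, Tendsto (fun ε => f ε ℓ) (𝓝[>] (0:ℝ)) (𝓝 (F ℓ))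
  convlam : ∀ ℓ, Tendsto (fun ε => lam ε ℓ) (𝓝[>] (0:ℝ)) (𝓝 (eC k (β (bI ℓ))))

/-- linear response of the off-band coordinates of the eigenvectors. -/
theorem stmt13 (N S : ℕ) (hN : 1 ≤ N) (hS1 : 1 ≤ S) (hSN : S ≤ N) (k : ℤ) (hk : k ≠ 0)
    (hS : 1 < S) (β : Fin S → ℝ) (hβ : Function.Injective β)
    (L : Fin S → ℕ) (hL : ∀ s, 0 < L s) (hsum : ∑ s, L s = N)
    (bI : Fin N → Fin S) (hbI : ∀ j, inBand L (bI j) j)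
    (Wd : Matrix (Fin N) (Fin N) ℝ) (hadm : LAdmissible L Wd bI) (hΓ : Gamma β)
    (γ : ℝ) (hγ : 0 < γ) (cf : ConvFam N S k β L bI Wd γ) :
    ∀ ℓ j : Fin N, ¬ inBand L (bI ℓ) j →
      (Tendsto (fun ε : ℝ => cf.f ε ℓ j / (ε : ℂ)) (𝓝[>] (0:ℝ))
        (𝓝 ((eC k (β (bI ℓ)) - eC k (β (bI j)))⁻¹ *
          ((Dmat k β bI * Wd.map Complex.ofReal).mulVec (cf.F ℓ)) j)) ∧
      Tendsto (fun ε : ℝ => (cf.f ε ℓ j - cf.F ℓ j) / (ε : ℂ)) (𝓝[>] (0:ℝ))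
        (𝓝 ((eC k (β (bI ℓ)) - eC k (β (bI j)))⁻¹ *
          ((Dmat k β bI * Wd.map Complex.ofReal).mulVec (cf.F ℓ)) j))) := by
  intro ℓ j hjl
  set eℓ := eC k (β (bI ℓ)) with heℓ
  set ej := eC k (β (bI j)) with hej
  have hbne : bI j ≠ bI ℓ := fun h => hjl (h ▸ hbI j)
  have hene : eℓ - ej ≠ 0 := sub_ne_zero.mpr (hΓ k hk (bI ℓ) (bI j) (Ne.symm hbne))
  set M := Dmat k β bI * Wd.map Complex.ofReal with hM
  have key : ∀ ε ∈ Set.Ioo (0:ℝ) γ,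
      (cf.lam ε ℓ - ej) * cf.f ε ℓ j = (ε : ℂ) * (M.mulVec (cf.f ε ℓ)) j := by
    intro ε hε
    have h := congrFun (cf.eig ε hε ℓ) j
    have hP : Pmat k β bI Wd ε = Dmat k β bI + (ε : ℂ) • M := by
      simp [Pmat, Weps, hM, Matrix.mul_add, Matrix.mul_one, Matrix.mul_smul]
    rw [hP] at h
    simp only [Matrix.add_mulVec, Matrix.smul_mulVec, Pi.add_apply,
      Pi.smul_apply, smul_eq_mul] at h
    have hd : (Dmat k β bI).mulVec (cf.f ε ℓ) j = ej * cf.f ε ℓ j := by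
      simp [Dmat, Matrix.mulVec_diagonal, hej]
    rw [hd] at h
    linear_combination -h
  have hA : Tendsto (fun ε => (M.mulVec (cf.f ε ℓ)) j) (𝓝[>] (0:ℝ))
      (𝓝 ((M.mulVec (cf.F ℓ)) j)) := by
    have hc : Continuous fun v : Fin N → ℂ => (M.mulVec v) j := by
      simp only [Matrix.mulVec, dotProduct]
      exact continuous_finset_sum _ fun m _ => continuous_const.mul (continuous_apply m)
    exact (hc.tendsto _).comp (cf.conv ℓ)
  have hden : Tendsto (fun ε => cf.lam ε ℓ - ej) (𝓝[>] (0:ℝ)) (𝓝 (eℓ - ej)) :=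
    (cf.convlam ℓ).sub tendsto_const_nhds
  have hdiv : Tendsto (fun ε => (M.mulVec (cf.f ε ℓ)) j / (cf.lam ε ℓ - ej))
      (𝓝[>] (0:ℝ)) (𝓝 ((M.mulVec (cf.F ℓ)) j / (eℓ - ej))) := hA.div hden hene
  have hev : ∀ᶠ ε in 𝓝[>] (0:ℝ),
      (M.mulVec (cf.f ε ℓ)) j / (cf.lam ε ℓ - ej) = cf.f ε ℓ j / (ε : ℂ) := by
    have h1 : ∀ᶠ ε in 𝓝[>] (0:ℝ), ε ∈ Set.Ioo (0:ℝ) γ :=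
      Ioo_mem_nhdsGT_of_mem ⟨le_refl 0, hγ⟩
    have h2 := hden.eventually_ne hene
    filter_upwards [h1, h2] with ε hε hne2
    have hε0 : (ε : ℂ) ≠ 0 := by
      exact_mod_cast ne_of_gt hε.1
    rw [div_eq_div_iff hne2 hε0]
    linear_combination -(key ε hε)
  have hval : (M.mulVec (cf.F ℓ)) j / (eℓ - ej) = (eℓ - ej)⁻¹ * (M.mulVec (cf.F ℓ)) j := by
    ring
  have goal1 : Tendsto (fun ε : ℝ => cf.f ε ℓ j / (ε : ℂ)) (𝓝[>] (0:ℝ))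
      (𝓝 ((eℓ - ej)⁻¹ * (M.mulVec (cf.F ℓ)) j)) := by
    rw [← hval]
    exact hdiv.congr' hev
  refine ⟨goal1, ?_⟩
  have hF0 : cf.F ℓ j = 0 := cf.supp ℓ j hjl
  simpa [hF0, sub_zero] using goal1
end
end

section
/- Assume {W_ε} is L-admissible, β ∈ Γ, S > 1 and k ≠ 0, let ({f^{(ℓ)}}, {λ̂^{(ℓ)}}, {f_ε^{(ℓ)}}, {λ_ε^{(ℓ)}}) be a convergent eigenbasis family on (0,γ), and let μ_ε^{(ℓ)} be the associated adjoint eigenvectors. Then for every ℓ ∈ {1,…,N} and every j ∈ {1,…,N} with j ∉ B_{s_ℓ}, lim_{ε→0} (μ_ε^{(ℓ)})_j / ε = (e^{2πikβ_{s_ℓ}} − e^{2πikβ_{s_j}})^{−1} · (Ẇ D_{k,−β,L} f^{(ℓ)})_j, where s_j denotes the index with j ∈ B_{s_j}. -/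
noncomputable section
open Complex Filter Topology MeasureTheory

variable {N S : ℕ}

lemma eC_conj (k : ℤ) (b : ℝ) : (starRingEnd ℂ) (eC k b) = eC (-k) b := by
  unfold eC
  rw [← Complex.exp_conj]
  congr 1
  simp only [map_mul, map_neg, Complex.conj_I, Complex.conj_ofReal, map_ofNat, map_intCast,
    Int.cast_neg]
  ring

/-- linear response of the off-band coordinates of the adjoint eigenvectors. -/
theorem stmt14 (N S : ℕ) (hN : 1 ≤ N) (hS1 : 1 ≤ S) (hSN : S ≤ N) (k : ℤ) (hk : k ≠ 0)
    (hS : 1 < S) (β : Fin S → ℝ) (hβ : Function.Injective β)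
    (L : Fin S → ℕ) (hL : ∀ s, 0 < L s) (hsum : ∑ s, L s = N)
    (bI : Fin N → Fin S) (hbI : ∀ j, inBand L (bI j) j)
    (Wd : Matrix (Fin N) (Fin N) ℝ) (hadm : LAdmissible L Wd bI) (hΓ : Gamma β)
    (γ : ℝ) (hγ : 0 < γ) (cf : ConvFam N S k β L bI Wd γ)
    (mu : ℝ → Fin N → Fin N → ℂ)
    (hmueig : ∀ ε ∈ Set.Ioo (0:ℝ) γ, ∀ r,
      (Pmat k β bI Wd ε).conjTranspose.mulVec (mu ε r)
        = (starRingEnd ℂ) (cf.lam ε r) • mu ε r)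
    (hmunorm : ∀ ε ∈ Set.Ioo (0:ℝ) γ, ∀ r, inn (cf.f ε r) (mu ε r) = 1)
    (hmusmooth : ∀ r, ContDiffOn ℝ (⊤ : ℕ∞) (fun ε => mu ε r) (Set.Ioo (0:ℝ) γ))
    (hmuconv : ∀ r, Tendsto (fun ε => mu ε r) (𝓝[>] (0:ℝ)) (𝓝 (cf.F r))) :
    ∀ ℓ j : Fin N, ¬ inBand L (bI ℓ) j →
      Tendsto (fun ε : ℝ => mu ε ℓ j / (ε : ℂ)) (𝓝[>] (0:ℝ))
        (𝓝 ((eC (-k) (β (bI ℓ)) - eC (-k) (β (bI j)))⁻¹ *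
          ((Wd.map Complex.ofReal * Dmat (-k) β bI).mulVec (cf.F ℓ)) j)) := by
  intro ℓ j hj
  have hbj : bI j ≠ bI ℓ := fun h => hj (h ▸ hbI j)
  set A : Matrix (Fin N) (Fin N) ℂ := Wd.map Complex.ofReal * Dmat (-k) β bI with hA
  set c : ℂ := eC (-k) (β (bI j)) with hc
  set d : ℂ := eC (-k) (β (bI ℓ)) with hd
  have hdc : d - c ≠ 0 :=
    sub_ne_zero.mpr (hΓ (-k) (neg_ne_zero.mpr hk) _ _ (Ne.symm hbj))
  have hPstar : ∀ ε : ℝ, (Pmat k β bI Wd ε).conjTranspose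
      = (1 + (ε:ℂ) • Wd.map Complex.ofReal) * Dmat (-k) β bI := by
    intro ε
    have hWct : (Wd.map Complex.ofReal).conjTranspose = Wd.map Complex.ofReal := by
      ext i j'
      simp only [Matrix.conjTranspose_apply, Matrix.map_apply, Complex.star_def,
        Complex.conj_ofReal]
      exact_mod_cast congrArg Complex.ofReal (hadm.1.apply i j')
    unfold Pmat Weps Dmat
    rw [Matrix.conjTranspose_mul]
    congr 1
    · rw [Matrix.conjTranspose_add, Matrix.conjTranspose_one, Matrix.conjTranspose_smul, hWct,
        Complex.star_def, Complex.conj_ofReal]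
    · rw [Matrix.diagonal_conjTranspose]
      have hstar : (star fun j : Fin N => eC k (β (bI j))) = fun j => eC (-k) (β (bI j)) := by
        funext l
        exact eC_conj k (β (bI l))
      rw [hstar]
  have key : ∀ ε ∈ Set.Ioo (0:ℝ) γ,
      ((starRingEnd ℂ) (cf.lam ε ℓ) - c) * mu ε ℓ j = (ε:ℂ) * (A.mulVec (mu ε ℓ)) j := by
    intro ε hε
    have h := congrFun (hmueig ε hε ℓ) j
    rw [hPstar] at h
    rw [← Matrix.mulVec_mulVec, Matrix.add_mulVec, Matrix.one_mulVec,
      Matrix.smul_mulVec] at h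
    have hdiag : (Dmat (-k) β bI).mulVec (mu ε ℓ) j = c * mu ε ℓ j := by
      simp [Dmat, Matrix.mulVec_diagonal, hc]
    have hWD : ((Wd.map Complex.ofReal).mulVec ((Dmat (-k) β bI).mulVec (mu ε ℓ))) j
        = (A.mulVec (mu ε ℓ)) j := by rw [Matrix.mulVec_mulVec]
    simp only [Pi.add_apply, Pi.smul_apply, smul_eq_mul] at h
    rw [hdiag, hWD] at h
    linear_combination -h
  have hconj : Tendsto (fun ε => (starRingEnd ℂ) (cf.lam ε ℓ)) (𝓝[>] (0:ℝ)) (𝓝 d) := by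
    have h2 := (Complex.continuous_conj.tendsto _).comp (cf.convlam ℓ)
    simpa [Function.comp_def, eC_conj, hd] using h2
  have hG : Tendsto (fun ε => A.mulVec (mu ε ℓ) j) (𝓝[>] (0:ℝ)) (𝓝 (A.mulVec (cf.F ℓ) j)) := by
    simp only [Matrix.mulVec, dotProduct]
    apply tendsto_finset_sum
    intro l _
    exact Tendsto.const_mul (A j l) (((continuous_apply l).tendsto _).comp (hmuconv ℓ))
  have hlim : Tendsto (fun ε => A.mulVec (mu ε ℓ) j / ((starRingEnd ℂ) (cf.lam ε ℓ) - c))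
      (𝓝[>] (0:ℝ)) (𝓝 (A.mulVec (cf.F ℓ) j / (d - c))) :=
    hG.div (hconj.sub tendsto_const_nhds) hdc
  have heq : (fun ε : ℝ => mu ε ℓ j / (ε:ℂ)) =ᶠ[𝓝[>] (0:ℝ)]
      (fun ε => A.mulVec (mu ε ℓ) j / ((starRingEnd ℂ) (cf.lam ε ℓ) - c)) := by
    have h1 : Set.Ioo (0:ℝ) γ ∈ 𝓝[>] (0:ℝ) := Ioo_mem_nhdsGT_of_mem ⟨le_refl 0, hγ⟩
    have h2 : ∀ᶠ ε in 𝓝[>] (0:ℝ), (starRingEnd ℂ) (cf.lam ε ℓ) - c ≠ 0 :=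
      (hconj.sub tendsto_const_nhds).eventually_ne hdc
    filter_upwards [h1, h2] with ε hε hne
    have hε0 : (ε:ℂ) ≠ 0 := Complex.ofReal_ne_zero.mpr (ne_of_gt hε.1)
    rw [div_eq_div_iff hε0 hne]
    linear_combination key ε hε
  have hfinal := hlim.congr' heq.symm
  have : A.mulVec (cf.F ℓ) j / (d - c) = (d - c)⁻¹ * A.mulVec (cf.F ℓ) j := by
    rw [div_eq_mul_inv, mul_comm]
  rw [this] at hfinal
  exact hfinal
end
end
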